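/- arXiv:2001.04272 — 4 statements merged into one kernel-verified Lean document; each statement's English description precedes it below -/
import Mathlib

section
/- The assignment sending σ_i to the block matrix Id_{i-1} ⊕ [[0, t],[1, 1−t]] ⊕ Id_{n−i−1} and τ_i to Id_{i-1} ⊕ [[0,1],[1,0]] ⊕ Id_{n−i−1} satisfies all the defining relations of the welded braid group wB_n, hence defines a group homomorphism Bur : wB_n → GL_n(ℤ[t^{±1}]) (the Burau representation of the welded braid group). -/
open FreeGroup LaurentPolynomial

/-- The free-group letter corresponding to the braid generator `σ_i` (0-indexed). -/
def wsig (i : ℕ) : FreeGroup (ℕ ⊕ ℕ) := FreeGroup.of (Sum.inl i)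

/-- The free-group letter corresponding to the permutation generator `τ_i` (0-indexed). -/
def wtau (i : ℕ) : FreeGroup (ℕ ⊕ ℕ) := FreeGroup.of (Sum.inr i)

/-- Defining relations of the welded braid group `wB n`, with generators
`σ_i, τ_i` for `i+2 ≤ n` (0-indexed version of `i ∈ {1,…,n-1}`). -/
def weldedRels (n : ℕ) : Set (FreeGroup (ℕ ⊕ ℕ)) :=
  { r | (∃ i k, i + 2 ≤ k ∧ k + 2 ≤ n ∧ r = wsig i * wsig k * (wsig k * wsig i)⁻¹)
      ∨ (∃ i, i + 3 ≤ n ∧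
          r = wsig i * wsig (i+1) * wsig i * (wsig (i+1) * wsig i * wsig (i+1))⁻¹)
      ∨ (∃ i k, i + 2 ≤ k ∧ k + 2 ≤ n ∧ r = wtau i * wtau k * (wtau k * wtau i)⁻¹)
      ∨ (∃ i, i + 3 ≤ n ∧
          r = wtau i * wtau (i+1) * wtau i * (wtau (i+1) * wtau i * wtau (i+1))⁻¹)
      ∨ (∃ i, i + 2 ≤ n ∧ r = wtau i * wtau i)
      ∨ (∃ i k, (i + 2 ≤ k ∨ k + 2 ≤ i) ∧ i + 2 ≤ n ∧ k + 2 ≤ n ∧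
          r = wsig i * wtau k * (wtau k * wsig i)⁻¹)
      ∨ (∃ i, i + 3 ≤ n ∧
          r = wtau i * wsig (i+1) * wsig i * (wsig (i+1) * wsig i * wtau (i+1))⁻¹)
      ∨ (∃ i, i + 3 ≤ n ∧
          r = wsig i * wtau (i+1) * wtau i * (wtau (i+1) * wtau i * wsig (i+1))⁻¹) }

/-- The welded braid group on `n` strands, by its standard presentation. -/
abbrev wB (n : ℕ) : Type := PresentedGroup (weldedRels n)

/-- The braid generator `σ_i` of `wB n` (0-indexed). -/
def wσ {n : ℕ} (i : ℕ) : wB n := PresentedGroup.of (Sum.inl i)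

/-- The permutation generator `τ_i` of `wB n` (0-indexed). -/
def wτ {n : ℕ} (i : ℕ) : wB n := PresentedGroup.of (Sum.inr i)

/-- The Burau matrix of `σ_i` : `Id_{i-1} ⊕ [[0,t],[1,1-t]] ⊕ Id_{n-i-1}`. -/
noncomputable def burS (n i : ℕ) : Matrix (Fin n) (Fin n) (LaurentPolynomial ℤ) :=
  Matrix.of fun j k =>
    if (j : ℕ) = i ∧ (k : ℕ) = i then 0
    else if (j : ℕ) = i ∧ (k : ℕ) = i + 1 then T 1
    else if (j : ℕ) = i + 1 ∧ (k : ℕ) = i then 1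
    else if (j : ℕ) = i + 1 ∧ (k : ℕ) = i + 1 then 1 - T 1
    else if (j : ℕ) = (k : ℕ) then 1 else 0

/-- The block permutation matrix `Id_{i-1} ⊕ [[0,1],[1,0]] ⊕ Id_{n-i-1}`. -/
noncomputable def permT (n i : ℕ) : Matrix (Fin n) (Fin n) (LaurentPolynomial ℤ) :=
  Matrix.of fun j k =>
    if (j : ℕ) = i ∧ (k : ℕ) = i then 0
    else if (j : ℕ) = i ∧ (k : ℕ) = i + 1 then 1
    else if (j : ℕ) = i + 1 ∧ (k : ℕ) = i then 1
    else if (j : ℕ) = i + 1 ∧ (k : ℕ) = i + 1 then 0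
    else if (j : ℕ) = (k : ℕ) then 1 else 0

/-- The Tong-Yang-Ma matrix of `σ_i` : `Id_{i-1} ⊕ [[0,1],[t,0]] ⊕ Id_{n-i-1}`. -/
noncomputable def tymS (n i : ℕ) : Matrix (Fin n) (Fin n) (LaurentPolynomial ℤ) :=
  Matrix.of fun j k =>
    if (j : ℕ) = i ∧ (k : ℕ) = i then 0
    else if (j : ℕ) = i ∧ (k : ℕ) = i + 1 then 1
    else if (j : ℕ) = i + 1 ∧ (k : ℕ) = i then T 1
    else if (j : ℕ) = i + 1 ∧ (k : ℕ) = i + 1 then 0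
    else if (j : ℕ) = (k : ℕ) then 1 else 0

noncomputable section

abbrev R := LaurentPolynomial ℤ

def EE {n : ℕ} (a b : Fin n) : Matrix (Fin n) (Fin n) R := Matrix.single a b 1

lemma EE_mul {n : ℕ} (a b c d : Fin n) :
    (EE a b : Matrix (Fin n) (Fin n) R) * EE c d = if b = c then EE a d else 0 := by
  unfold EE
  split
  · subst ‹b = c›; simp [Matrix.single_mul_single_same]
  · exact Matrix.single_mul_single_of_ne (c := (1 : R)) a b c ‹b ≠ c› 1

def bS {n : ℕ} (a b : Fin n) : Matrix (Fin n) (Fin n) R :=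
  1 - EE a a + (T 1 : R) • EE a b + EE b a - (T 1 : R) • EE b b

def pT {n : ℕ} (a b : Fin n) : Matrix (Fin n) (Fin n) R :=
  1 - EE a a + EE a b + EE b a - EE b b

def bSi {n : ℕ} (a b : Fin n) : Matrix (Fin n) (Fin n) R :=
  1 - (T (-1) : R) • EE a a + EE a b + (T (-1) : R) • EE b a - EE b b

lemma htt : (T 1 : R) * T (-1) = 1 := by
  rw [← T_add]; norm_num

section rels
variable {n : ℕ} (a b c d : Fin n)

lemma pT_sq (hab : a ≠ b) : pT a b * pT a b = 1 := by
  simp only [pT, mul_add, add_mul, mul_sub, sub_mul, mul_one, one_mul, EE_mul, hab,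
    hab.symm, if_true, if_false, ite_true, ite_false, reduceIte, smul_mul_assoc,
    mul_smul_comm, smul_zero, sub_zero, add_zero, zero_sub, sub_neg_eq_add]
  module

lemma bS_mul_bSi (hab : a ≠ b) : bS a b * bSi a b = 1 := by
  simp only [bS, bSi, mul_add, add_mul, mul_sub, sub_mul, mul_one, one_mul, EE_mul, hab,
    hab.symm, if_true, if_false, ite_true, ite_false, reduceIte, smul_mul_assoc,
    mul_smul_comm, smul_zero, sub_zero, add_zero, zero_sub, sub_neg_eq_add,
    smul_smul, htt, one_smul]
  match_scalars <;> first | ring1 | linear_combination htt | linear_combination -htt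

lemma bSi_mul_bS (hab : a ≠ b) : bSi a b * bS a b = 1 := by
  simp only [bS, bSi, mul_add, add_mul, mul_sub, sub_mul, mul_one, one_mul, EE_mul, hab,
    hab.symm, if_true, if_false, ite_true, ite_false, reduceIte, smul_mul_assoc,
    mul_smul_comm, smul_zero, sub_zero, add_zero, zero_sub, sub_neg_eq_add,
    smul_smul, htt, mul_comm (T (-1) : R) (T 1 : R), one_smul]
  match_scalars <;> first | ring1 | linear_combination htt | linear_combination -htt

lemma bS_comm (hab : a ≠ b) (hcd : c ≠ d) (hac : a ≠ c) (had : a ≠ d) (hbc : b ≠ c)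
    (hbd : b ≠ d) : bS a b * bS c d = bS c d * bS a b := by
  simp only [bS, mul_add, add_mul, mul_sub, sub_mul, mul_one, one_mul, EE_mul, hab,
    hab.symm, hcd, hcd.symm, hac, hac.symm, had, had.symm, hbc, hbc.symm, hbd, hbd.symm,
    if_true, if_false, ite_true, ite_false, reduceIte, smul_mul_assoc,
    mul_smul_comm, smul_zero, sub_zero, add_zero, zero_sub, sub_neg_eq_add, smul_smul]
  module

lemma pT_comm (hab : a ≠ b) (hcd : c ≠ d) (hac : a ≠ c) (had : a ≠ d) (hbc : b ≠ c)
    (hbd : b ≠ d) : pT a b * pT c d = pT c d * pT a b := by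
  simp only [pT, mul_add, add_mul, mul_sub, sub_mul, mul_one, one_mul, EE_mul, hab,
    hab.symm, hcd, hcd.symm, hac, hac.symm, had, had.symm, hbc, hbc.symm, hbd, hbd.symm,
    if_true, if_false, ite_true, ite_false, reduceIte, smul_zero, sub_zero, add_zero,
    zero_sub, sub_neg_eq_add]
  module

lemma bS_pT_comm (hab : a ≠ b) (hcd : c ≠ d) (hac : a ≠ c) (had : a ≠ d) (hbc : b ≠ c)
    (hbd : b ≠ d) : bS a b * pT c d = pT c d * bS a b := by
  simp only [bS, pT, mul_add, add_mul, mul_sub, sub_mul, mul_one, one_mul, EE_mul, hab,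
    hab.symm, hcd, hcd.symm, hac, hac.symm, had, had.symm, hbc, hbc.symm, hbd, hbd.symm,
    if_true, if_false, ite_true, ite_false, reduceIte, smul_mul_assoc,
    mul_smul_comm, smul_zero, sub_zero, add_zero, zero_sub, sub_neg_eq_add, smul_smul]
  module

lemma bS_braid (hab : a ≠ b) (hbc : b ≠ c) (hac : a ≠ c) :
    bS a b * bS b c * bS a b = bS b c * bS a b * bS b c := by
  simp only [bS, mul_add, add_mul, mul_sub, sub_mul, mul_one, one_mul, EE_mul, hab,
    hab.symm, hbc, hbc.symm, hac, hac.symm,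
    if_true, if_false, ite_true, ite_false, reduceIte, smul_mul_assoc,
    mul_smul_comm, smul_zero, sub_zero, add_zero, zero_sub, sub_neg_eq_add, smul_smul,
    zero_smul, smul_add, smul_sub, neg_zero, add_neg_cancel, neg_add_rev, neg_neg,
    neg_sub, sub_self]
  module

lemma pT_braid (hab : a ≠ b) (hbc : b ≠ c) (hac : a ≠ c) :
    pT a b * pT b c * pT a b = pT b c * pT a b * pT b c := by
  simp only [pT, mul_add, add_mul, mul_sub, sub_mul, mul_one, one_mul, EE_mul, hab,
    hab.symm, hbc, hbc.symm, hac, hac.symm,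
    if_true, if_false, ite_true, ite_false, reduceIte, smul_zero, sub_zero, add_zero,
    zero_sub, sub_neg_eq_add]
  module

lemma mixed1 (hab : a ≠ b) (hbc : b ≠ c) (hac : a ≠ c) :
    pT a b * bS b c * bS a b = bS b c * bS a b * pT b c := by
  simp only [bS, pT, mul_add, add_mul, mul_sub, sub_mul, mul_one, one_mul, EE_mul, hab,
    hab.symm, hbc, hbc.symm, hac, hac.symm,
    if_true, if_false, ite_true, ite_false, reduceIte, smul_mul_assoc,
    mul_smul_comm, smul_zero, sub_zero, add_zero, zero_sub, sub_neg_eq_add, smul_smul]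
  module

lemma mixed2 (hab : a ≠ b) (hbc : b ≠ c) (hac : a ≠ c) :
    bS a b * pT b c * pT a b = pT b c * pT a b * bS b c := by
  simp only [bS, pT, mul_add, add_mul, mul_sub, sub_mul, mul_one, one_mul, EE_mul, hab,
    hab.symm, hbc, hbc.symm, hac, hac.symm,
    if_true, if_false, ite_true, ite_false, reduceIte, smul_mul_assoc,
    mul_smul_comm, smul_zero, sub_zero, add_zero, zero_sub, sub_neg_eq_add, smul_smul]
  module

end rels
section hom
variable {n : ℕ}

def finA {i : ℕ} (h : i + 1 < n) : Fin n := ⟨i, Nat.lt_of_succ_lt h⟩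
def finB {i : ℕ} (h : i + 1 < n) : Fin n := ⟨i + 1, h⟩

lemma finAB_ne {i : ℕ} (h : i + 1 < n) : finA h ≠ finB h :=
  Fin.ne_of_val_ne (show i ≠ i + 1 by omega)

noncomputable def sU {i : ℕ} (h : i + 1 < n) :
    Matrix.GeneralLinearGroup (Fin n) (LaurentPolynomial ℤ) :=
  ⟨bS (finA h) (finB h), bSi (finA h) (finB h),
    bS_mul_bSi _ _ (finAB_ne h), bSi_mul_bS _ _ (finAB_ne h)⟩

noncomputable def tU {i : ℕ} (h : i + 1 < n) :
    Matrix.GeneralLinearGroup (Fin n) (LaurentPolynomial ℤ) :=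
  ⟨pT (finA h) (finB h), pT (finA h) (finB h),
    pT_sq _ _ (finAB_ne h), pT_sq _ _ (finAB_ne h)⟩

end hom

noncomputable def f0 (n : ℕ) :
    ℕ ⊕ ℕ → Matrix.GeneralLinearGroup (Fin n) (LaurentPolynomial ℤ)
  | Sum.inl i => if h : i + 1 < n then sU h else 1
  | Sum.inr i => if h : i + 1 < n then tU h else 1

lemma rels_hold (n : ℕ) : ∀ r ∈ weldedRels n, FreeGroup.lift (f0 n) r = 1 := by
  intro r hr
  rcases hr with ⟨i,k,hik,hkn,rfl⟩|⟨i,hin,rfl⟩|⟨i,k,hik,hkn,rfl⟩|⟨i,hin,rfl⟩|⟨i,hin,rfl⟩|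
    ⟨i,k,hik,hin,hkn,rfl⟩|⟨i,hin,rfl⟩|⟨i,hin,rfl⟩
  · have h1 : i + 1 < n := by omega
    have h2 : k + 1 < n := by omega
    simp only [wsig, _root_.map_mul, _root_.map_inv, FreeGroup.lift_apply_of, f0, dif_pos h1, dif_pos h2,
      mul_inv_eq_one]
    refine Units.ext ?_
    show bS (finA h1) (finB h1) * bS (finA h2) (finB h2)
        = bS (finA h2) (finB h2) * bS (finA h1) (finB h1)
    exact bS_comm _ _ _ _ (finAB_ne h1) (finAB_ne h2)
      (Fin.ne_of_val_ne (show i ≠ k by omega))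
      (Fin.ne_of_val_ne (show i ≠ k + 1 by omega))
      (Fin.ne_of_val_ne (show i + 1 ≠ k by omega))
      (Fin.ne_of_val_ne (show i + 1 ≠ k + 1 by omega))
  · have h1 : i + 1 < n := by omega
    have h2 : i + 1 + 1 < n := by omega
    simp only [wsig, _root_.map_mul, _root_.map_inv, FreeGroup.lift_apply_of, f0, dif_pos h1, dif_pos h2,
      mul_inv_eq_one]
    refine Units.ext ?_
    show bS (finA h1) (finB h1) * bS (finA h2) (finB h2) * bS (finA h1) (finB h1)
        = bS (finA h2) (finB h2) * bS (finA h1) (finB h1) * bS (finA h2) (finB h2)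
    have e : finA h2 = finB h1 := rfl
    rw [e]
    exact bS_braid _ _ _ (finAB_ne h1)
      (Fin.ne_of_val_ne (show i + 1 ≠ i + 1 + 1 by omega))
      (Fin.ne_of_val_ne (show i ≠ i + 1 + 1 by omega))
  · have h1 : i + 1 < n := by omega
    have h2 : k + 1 < n := by omega
    simp only [wtau, _root_.map_mul, _root_.map_inv, FreeGroup.lift_apply_of, f0, dif_pos h1, dif_pos h2,
      mul_inv_eq_one]
    refine Units.ext ?_
    show pT (finA h1) (finB h1) * pT (finA h2) (finB h2)
        = pT (finA h2) (finB h2) * pT (finA h1) (finB h1)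
    exact pT_comm _ _ _ _ (finAB_ne h1) (finAB_ne h2)
      (Fin.ne_of_val_ne (show i ≠ k by omega))
      (Fin.ne_of_val_ne (show i ≠ k + 1 by omega))
      (Fin.ne_of_val_ne (show i + 1 ≠ k by omega))
      (Fin.ne_of_val_ne (show i + 1 ≠ k + 1 by omega))
  · have h1 : i + 1 < n := by omega
    have h2 : i + 1 + 1 < n := by omega
    simp only [wtau, _root_.map_mul, _root_.map_inv, FreeGroup.lift_apply_of, f0, dif_pos h1, dif_pos h2,
      mul_inv_eq_one]
    refine Units.ext ?_
    show pT (finA h1) (finB h1) * pT (finA h2) (finB h2) * pT (finA h1) (finB h1)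
        = pT (finA h2) (finB h2) * pT (finA h1) (finB h1) * pT (finA h2) (finB h2)
    have e : finA h2 = finB h1 := rfl
    rw [e]
    exact pT_braid _ _ _ (finAB_ne h1)
      (Fin.ne_of_val_ne (show i + 1 ≠ i + 1 + 1 by omega))
      (Fin.ne_of_val_ne (show i ≠ i + 1 + 1 by omega))
  · have h1 : i + 1 < n := by omega
    simp only [wtau, _root_.map_mul, FreeGroup.lift_apply_of, f0, dif_pos h1]
    refine Units.ext ?_
    show pT (finA h1) (finB h1) * pT (finA h1) (finB h1) = (1 : Matrix (Fin n) (Fin n) (LaurentPolynomial ℤ))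
    exact pT_sq _ _ (finAB_ne h1)
  · have h1 : i + 1 < n := by omega
    have h2 : k + 1 < n := by omega
    simp only [wsig, wtau, _root_.map_mul, _root_.map_inv, FreeGroup.lift_apply_of, f0, dif_pos h1,
      dif_pos h2, mul_inv_eq_one]
    refine Units.ext ?_
    show bS (finA h1) (finB h1) * pT (finA h2) (finB h2)
        = pT (finA h2) (finB h2) * bS (finA h1) (finB h1)
    exact bS_pT_comm _ _ _ _ (finAB_ne h1) (finAB_ne h2)
      (Fin.ne_of_val_ne (show i ≠ k by omega))
      (Fin.ne_of_val_ne (show i ≠ k + 1 by omega))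
      (Fin.ne_of_val_ne (show i + 1 ≠ k by omega))
      (Fin.ne_of_val_ne (show i + 1 ≠ k + 1 by omega))
  · have h1 : i + 1 < n := by omega
    have h2 : i + 1 + 1 < n := by omega
    simp only [wsig, wtau, _root_.map_mul, _root_.map_inv, FreeGroup.lift_apply_of, f0, dif_pos h1,
      dif_pos h2, mul_inv_eq_one]
    refine Units.ext ?_
    show pT (finA h1) (finB h1) * bS (finA h2) (finB h2) * bS (finA h1) (finB h1)
        = bS (finA h2) (finB h2) * bS (finA h1) (finB h1) * pT (finA h2) (finB h2)
    have e : finA h2 = finB h1 := rfl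
    rw [e]
    exact mixed1 _ _ _ (finAB_ne h1)
      (Fin.ne_of_val_ne (show i + 1 ≠ i + 1 + 1 by omega))
      (Fin.ne_of_val_ne (show i ≠ i + 1 + 1 by omega))
  · have h1 : i + 1 < n := by omega
    have h2 : i + 1 + 1 < n := by omega
    simp only [wsig, wtau, _root_.map_mul, _root_.map_inv, FreeGroup.lift_apply_of, f0, dif_pos h1,
      dif_pos h2, mul_inv_eq_one]
    refine Units.ext ?_
    show bS (finA h1) (finB h1) * pT (finA h2) (finB h2) * pT (finA h1) (finB h1)
        = pT (finA h2) (finB h2) * pT (finA h1) (finB h1) * bS (finA h2) (finB h2)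
    have e : finA h2 = finB h1 := rfl
    rw [e]
    exact mixed2 _ _ _ (finAB_ne h1)
      (Fin.ne_of_val_ne (show i + 1 ≠ i + 1 + 1 by omega))
      (Fin.ne_of_val_ne (show i ≠ i + 1 + 1 by omega))

end

section bridge
variable {n i : ℕ}

lemma burS_eq (h : i + 1 < n) :
    burS n i = bS ⟨i, Nat.lt_of_succ_lt h⟩ ⟨i + 1, h⟩ := by
  refine Matrix.ext fun j k => ?_
  simp only [burS, bS, EE, Matrix.single, Matrix.of_apply, Matrix.sub_apply,
    Matrix.add_apply, Matrix.smul_apply, Matrix.one_apply, Fin.ext_iff, smul_eq_mul]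
  split_ifs <;> first | ring1 | (exfalso; omega)

lemma permT_eq (h : i + 1 < n) :
    permT n i = pT ⟨i, Nat.lt_of_succ_lt h⟩ ⟨i + 1, h⟩ := by
  refine Matrix.ext fun j k => ?_
  simp only [permT, pT, EE, Matrix.single, Matrix.of_apply, Matrix.sub_apply,
    Matrix.add_apply, Matrix.one_apply, Fin.ext_iff]
  split_ifs <;> first | ring1 | (exfalso; omega)

end bridge

/-- The Burau representation of the welded braid group: the matrix assignment
satisfies all defining relations of `wB n`, hence defines a group homomorphism
`Bur : wB n → GL_n(ℤ[t^{±1}])`. -/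
theorem burau_representation_of_welded_braid_group (n : ℕ) :
    ∃ f : wB n →* Matrix.GeneralLinearGroup (Fin n) (LaurentPolynomial ℤ),
      ∀ i : ℕ, i + 2 ≤ n →
        ((f (wσ i) : Matrix (Fin n) (Fin n) (LaurentPolynomial ℤ)) = burS n i ∧
         (f (wτ i) : Matrix (Fin n) (Fin n) (LaurentPolynomial ℤ)) = permT n i) := by
  refine ⟨PresentedGroup.toGroup (rels_hold n), fun i hi => ?_⟩
  have h : i + 1 < n := by omega
  constructor
  · have e : PresentedGroup.toGroup (rels_hold n) (wσ i) = sU h := by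
      rw [wσ, PresentedGroup.toGroup.of]
      simp [f0, dif_pos h]
    rw [e]
    show bS (finA h) (finB h) = burS n i
    exact (burS_eq h).symm
  · have e : PresentedGroup.toGroup (rels_hold n) (wτ i) = tU h := by
      rw [wτ, PresentedGroup.toGroup.of]
      simp [f0, dif_pos h]
    rw [e]
    show pT (finA h) (finB h) = permT n i
    exact (permT_eq h).symm
end

section
/- In wB_{n+1}, for all 1 ≤ i ≤ n−1 the identity σ_{i+1} σ_i τ_i σ_{i+1}^{-1} = τ_i σ_{i+1} τ_{i+1} τ_i holds; consequently ξ_{n,1}(a_n(σ_i)(x_i)) = σ_{i+1} ξ_{n,1}(x_i) σ_{i+1}^{-1}, where ξ_{n,1} : F_n → wB_{n+1} is defined by x_j ↦ (τ_{j-1}⋯τ_2τ_1)^{-1}(σ_j τ_j)(τ_{j-1}⋯τ_2τ_1). -/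
open FreeGroup LaurentPolynomial

/-- The product `τ_{j-1} ⋯ τ_1 τ_0` in `wB n` (0-indexed). -/
def tauWord (n j : ℕ) : wB n := (((List.range j).reverse).map (fun k => (wτ k : wB n))).prod

lemma rel_one {n : ℕ} {r : FreeGroup (ℕ ⊕ ℕ)} (hr : r ∈ weldedRels n) :
    (QuotientGroup.mk r : wB n) = 1 :=
  (QuotientGroup.eq_one_iff r).mpr (Subgroup.subset_normalClosure hr)

lemma wtau_sq {n : ℕ} {j : ℕ} (hj : j + 2 ≤ n) : (wτ j : wB n) * wτ j = 1 :=
  rel_one (Or.inr (Or.inr (Or.inr (Or.inr (Or.inl ⟨j, hj, rfl⟩)))))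

lemma rel_mixed7 {n : ℕ} {i : ℕ} (hi : i + 3 ≤ n) :
    (wτ i : wB n) * (wσ (i+1) * wσ i) = wσ (i+1) * wσ i * wτ (i+1) := by
  have h1 : ((wτ i : wB n) * wσ (i+1) * wσ i) * (wσ (i+1) * wσ i * wτ (i+1))⁻¹ = 1 :=
    rel_one (Or.inr (Or.inr (Or.inr (Or.inr (Or.inr (Or.inr (Or.inl ⟨i, hi, rfl⟩)))))))
  have := mul_inv_eq_one.mp h1
  rw [← this]; group

lemma rel_mixed8 {n : ℕ} {i : ℕ} (hi : i + 3 ≤ n) :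
    (wσ i : wB n) * (wτ (i+1) * wτ i) = wτ (i+1) * wτ i * wσ (i+1) := by
  have h1 : ((wσ i : wB n) * wτ (i+1) * wτ i) * (wτ (i+1) * wτ i * wσ (i+1))⁻¹ = 1 :=
    rel_one (Or.inr (Or.inr (Or.inr (Or.inr (Or.inr (Or.inr (Or.inr ⟨i, hi, rfl⟩)))))))
  have := mul_inv_eq_one.mp h1
  rw [← this]; group

lemma rel_comm {n : ℕ} {i k : ℕ} (hik : i + 2 ≤ k ∨ k + 2 ≤ i) (hi : i + 2 ≤ n)
    (hk : k + 2 ≤ n) : (wσ i : wB n) * wτ k = wτ k * wσ i := by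
  have h1 : ((wσ i : wB n) * wτ k) * (wτ k * wσ i)⁻¹ = 1 :=
    rel_one (Or.inr (Or.inr (Or.inr (Or.inr (Or.inr (Or.inl ⟨i, k, hik, hi, hk, rfl⟩))))))
  exact mul_inv_eq_one.mp h1

lemma tauWord_succ (n j : ℕ) : tauWord n (j+1) = wτ j * tauWord n j := by
  simp [tauWord, List.range_succ]

lemma sigma_comm_tauWord {n i : ℕ} (hi : i + 2 ≤ n) :
    ∀ j, j ≤ i → (wσ (i+1) : wB (n+1)) * tauWord (n+1) j = tauWord (n+1) j * wσ (i+1) := by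
  intro j
  induction j with
  | zero => intro _; simp [tauWord]
  | succ j ih =>
    intro hj
    have hji : j ≤ i := Nat.le_of_succ_le hj
    have hc : (wσ (i+1) : wB (n+1)) * wτ j = wτ j * wσ (i+1) :=
      rel_comm (Or.inr (by omega)) (by omega) (by omega)
    rw [tauWord_succ, ← mul_assoc, hc, mul_assoc, ih hji, ← mul_assoc]

/-- In `wB_{n+1}`: `σ_{i+1}σ_iτ_iσ_{i+1}⁻¹ = τ_iσ_{i+1}τ_{i+1}τ_i`; consequently,
with `ξ_{n,1}(x_j) = (τ_{j-1}⋯τ_1)⁻¹(σ_jτ_j)(τ_{j-1}⋯τ_1)` and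
`a_n(σ_i)(x_i) = x_{i+1}`, one has
`ξ_{n,1}(a_n(σ_i)(x_i)) = σ_{i+1} ξ_{n,1}(x_i) σ_{i+1}⁻¹`. -/
theorem xi_conjugation_identity (n i : ℕ) (h : i + 2 ≤ n) :
    (wσ (i + 1) : wB (n + 1)) * wσ i * wτ i * (wσ (i + 1))⁻¹ =
      wτ i * wσ (i + 1) * wτ (i + 1) * wτ i ∧
    ((tauWord (n + 1) (i + 1))⁻¹ * (wσ (i + 1) * wτ (i + 1)) * tauWord (n + 1) (i + 1) =
      wσ (i + 1) *
        ((tauWord (n + 1) i)⁻¹ * (wσ i * wτ i) * tauWord (n + 1) i) *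
        (wσ (i + 1))⁻¹) := by
  have hi3 : i + 3 ≤ n + 1 := by omega
  have h7 : (wτ i : wB (n+1)) * (wσ (i+1) * wσ i) = wσ (i+1) * wσ i * wτ (i+1) :=
    rel_mixed7 hi3
  have h8 : (wσ i : wB (n+1)) * (wτ (i+1) * wτ i) = wτ (i+1) * wτ i * wσ (i+1) :=
    rel_mixed8 hi3
  have hτ0 : (wτ i : wB (n+1)) * wτ i = 1 := wtau_sq (by omega)
  have hτ1 : (wτ (i+1) : wB (n+1)) * wτ (i+1) = 1 := wtau_sq (by omega)
  have key : (wτ i : wB (n+1)) * wσ (i+1) * wτ (i+1) * wτ i * wσ (i+1)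
      = wσ (i+1) * wσ i * wτ i := by
    calc (wτ i : wB (n+1)) * wσ (i+1) * wτ (i+1) * wτ i * wσ (i+1)
        = wτ i * wσ (i+1) * (wτ (i+1) * wτ i * wσ (i+1)) := by group
      _ = wτ i * wσ (i+1) * (wσ i * (wτ (i+1) * wτ i)) := by rw [← h8]
      _ = wτ i * (wσ (i+1) * wσ i) * (wτ (i+1) * wτ i) := by group
      _ = wσ (i+1) * wσ i * wτ (i+1) * (wτ (i+1) * wτ i) := by rw [h7]
      _ = wσ (i+1) * wσ i * (wτ (i+1) * wτ (i+1)) * wτ i := by group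
      _ = wσ (i+1) * wσ i * wτ i := by rw [hτ1, mul_one]
  have part1 : (wσ (i + 1) : wB (n + 1)) * wσ i * wτ i * (wσ (i + 1))⁻¹ =
      wτ i * wσ (i + 1) * wτ (i + 1) * wτ i := by
    rw [← key]; group
  refine ⟨part1, ?_⟩
  have hC : Commute (wσ (i+1) : wB (n+1)) (tauWord (n+1) i) := sigma_comm_tauWord h i le_rfl
  have hτ0inv : (wτ i : wB (n+1))⁻¹ = wτ i := inv_eq_of_mul_eq_one_right hτ0
  rw [tauWord_succ]
  calc (wτ i * tauWord (n+1) i)⁻¹ * (wσ (i + 1) * wτ (i + 1)) * (wτ i * tauWord (n+1) i)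
      = (tauWord (n+1) i)⁻¹ * (wτ i * wσ (i+1) * wτ (i+1) * wτ i) * tauWord (n+1) i := by
        rw [mul_inv_rev, hτ0inv]; group
    _ = (tauWord (n+1) i)⁻¹ * (wσ (i + 1) * wσ i * wτ i * (wσ (i + 1))⁻¹) * tauWord (n+1) i := by
        rw [part1]
    _ = ((tauWord (n+1) i)⁻¹ * wσ (i+1)) * (wσ i * wτ i) * ((wσ (i+1))⁻¹ * tauWord (n+1) i) := by
        group
    _ = (wσ (i+1) * (tauWord (n+1) i)⁻¹) * (wσ i * wτ i) * (tauWord (n+1) i * (wσ (i+1))⁻¹) := by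
        rw [hC.inv_right.eq, hC.inv_left.eq]
    _ = wσ (i + 1) * ((tauWord (n + 1) i)⁻¹ * (wσ i * wτ i) * tauWord (n + 1) i) *
        (wσ (i + 1))⁻¹ := by group
end

section
/- In wB_{n+1}, for all 1 ≤ i ≤ n−1 the identity τ_i σ_{i+1} τ_{i+1} τ_i σ_{i+1} τ_i σ_{i+1} τ_{i+1} τ_i = σ_i σ_{i+1} τ_{i+1} τ_i σ_{i+1} holds. -/
open FreeGroup LaurentPolynomial

lemma rel_eq_one {n : ℕ} {r : FreeGroup (ℕ ⊕ ℕ)} (hr : r ∈ weldedRels n) :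
    PresentedGroup.mk (weldedRels n) r = 1 := by
  have : r ∈ Subgroup.normalClosure (weldedRels n) := Subgroup.subset_normalClosure hr
  exact (QuotientGroup.eq_one_iff r).mpr this

lemma tau_sq {n j : ℕ} (hj : j + 2 ≤ n) : (wτ j : wB n) * wτ j = 1 := by
  have := rel_eq_one (n := n) (r := wtau j * wtau j)
    (Or.inr (Or.inr (Or.inr (Or.inr (Or.inl ⟨j, hj, rfl⟩)))))
  simpa [wτ, wtau, PresentedGroup.of, map_mul] using this

lemma rel_sigma {n j : ℕ} (hj : j + 3 ≤ n) :
    (wσ j : wB n) * wσ (j+1) * wσ j = wσ (j+1) * wσ j * wσ (j+1) := by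
  have := rel_eq_one (n := n)
    (r := wsig j * wsig (j+1) * wsig j * (wsig (j+1) * wsig j * wsig (j+1))⁻¹)
    (Or.inr (Or.inl ⟨j, hj, rfl⟩))
  simp only [_root_.map_mul, _root_.map_inv] at this
  rw [mul_inv_eq_one] at this
  simpa [wσ, wsig, PresentedGroup.of, map_mul] using this

lemma rel_mixed1 {n j : ℕ} (hj : j + 3 ≤ n) :
    (wτ j : wB n) * wσ (j+1) * wσ j = wσ (j+1) * wσ j * wτ (j+1) := by
  have := rel_eq_one (n := n)
    (r := wtau j * wsig (j+1) * wsig j * (wsig (j+1) * wsig j * wtau (j+1))⁻¹)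
    (Or.inr (Or.inr (Or.inr (Or.inr (Or.inr (Or.inr (Or.inl ⟨j, hj, rfl⟩)))))))
  simp only [_root_.map_mul, _root_.map_inv] at this
  rw [mul_inv_eq_one] at this
  simpa [wσ, wτ, wsig, wtau, PresentedGroup.of, map_mul] using this

lemma rel_mixed2 {n j : ℕ} (hj : j + 3 ≤ n) :
    (wσ j : wB n) * wτ (j+1) * wτ j = wτ (j+1) * wτ j * wσ (j+1) := by
  have := rel_eq_one (n := n)
    (r := wsig j * wtau (j+1) * wtau j * (wtau (j+1) * wtau j * wsig (j+1))⁻¹)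
    (Or.inr (Or.inr (Or.inr (Or.inr (Or.inr (Or.inr (Or.inr ⟨j, hj, rfl⟩)))))))
  simp only [_root_.map_mul, _root_.map_inv] at this
  rw [mul_inv_eq_one] at this
  simpa [wσ, wτ, wsig, wtau, PresentedGroup.of, map_mul] using this

lemma key {G : Type*} [Group G] (a b c s : G) (haa : a*a = 1) (hcc : c*c = 1)
    (hR1 : a*b*s = b*s*c) (hR2 : s*c*a = c*a*b) (hRs : s*b*s = b*s*b) :
    a*b*c*a*b*a*b*c*a = s*b*c*a*b := by
  have ha2 : ∀ x : G, a*(a*x) = x := fun x => by rw [← mul_assoc, haa, one_mul]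
  have hc2 : ∀ x : G, c*(c*x) = x := fun x => by rw [← mul_assoc, hcc, one_mul]
  have hR2x : ∀ x : G, c*(a*(b*x)) = s*(c*(a*x)) := fun x => by
    rw [← mul_assoc, ← mul_assoc, ← hR2]; simp [mul_assoc]
  have hR1x : ∀ x : G, a*(b*(s*x)) = b*(s*(c*x)) := fun x => by
    rw [← mul_assoc, ← mul_assoc, hR1]; simp [mul_assoc]
  have hRsx : ∀ x : G, b*(s*(b*x)) = s*(b*(s*x)) := fun x => by
    rw [← mul_assoc, ← mul_assoc, ← hRs]; simp [mul_assoc]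
  have hR2' : s*(c*a) = c*(a*b) := by rw [← mul_assoc, hR2, mul_assoc]
  simp only [mul_assoc]
  rw [hR2x, ha2, hR1x, hc2, hRsx, hR2']

/-- In `wB_{n+1}`:
`τ_iσ_{i+1}τ_{i+1}τ_iσ_{i+1}τ_iσ_{i+1}τ_{i+1}τ_i = σ_iσ_{i+1}τ_{i+1}τ_iσ_{i+1}`. -/
theorem welded_word_identity (n i : ℕ) (h : i + 2 ≤ n) :
    (wτ i : wB (n + 1)) * wσ (i + 1) * wτ (i + 1) * wτ i * wσ (i + 1) * wτ i *
        wσ (i + 1) * wτ (i + 1) * wτ i =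
      wσ i * wσ (i + 1) * wτ (i + 1) * wτ i * wσ (i + 1) := by
  have hi3 : i + 3 ≤ n + 1 := by omega
  have haa := tau_sq (n := n+1) (j := i) (by omega)
  have hcc := tau_sq (n := n+1) (j := i+1) (by omega)
  have hR1 := rel_mixed1 (n := n+1) (j := i) hi3
  have hR2 := rel_mixed2 (n := n+1) (j := i) hi3
  have hRs := rel_sigma (n := n+1) (j := i) hi3
  have := key (wτ i : wB (n+1)) (wσ (i+1)) (wτ (i+1)) (wσ i) haa hcc hR1 hR2 hRs
  -- this : a*b*c*a*b*a*b*c*a = s*b*c*a*b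
  -- goal: a*b*c*a*b*a*b*c*a = s*b*c*a*b  (check letter order!)
  exact this
end

section
/- The kernel of the welded Burau representation is nontrivial already for n = 2: there exists a nontrivial element of wB_2 (with presentation ⟨σ, τ | τ² = 1⟩) in the kernel of the homomorphism wB_2 → GL_2(ℤ[t^{±1}]) sending σ ↦ [[0,t],[1,1−t]] and τ ↦ [[0,1],[1,0]]; equivalently, this homomorphism is not injective. -/
open LaurentPolynomial

/-- The welded braid group on 2 strands: `⟨σ, τ ∣ τ² = 1⟩`. -/
abbrev WB2 : Type :=
  PresentedGroup ({FreeGroup.of true * FreeGroup.of true} : Set (FreeGroup Bool))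

/-- The generator `σ_1` of `wB_2`. -/
def WB2.σ : WB2 := PresentedGroup.of false

/-- The generator `τ_1` of `wB_2`. -/
def WB2.τ : WB2 := PresentedGroup.of true

/-- Images of the generators in `S₄` witnessing nontriviality. -/
def wbPermGen : Bool → Equiv.Perm (Fin 4) :=
  fun b => if b then Equiv.swap 2 3 else Equiv.swap 0 1 * Equiv.swap 1 2

/-- The permutation representation of `WB2`. -/
def wbPerm : WB2 →* Equiv.Perm (Fin 4) :=
  PresentedGroup.toGroup (f := wbPermGen) (by
    intro r hr
    simp only [Set.mem_singleton_iff] at hr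
    subst hr
    simp only [map_mul, FreeGroup.lift_apply_of, wbPermGen, if_true]
    decide)

set_option maxRecDepth 8000 in
/-- The welded Burau representation is not faithful already for `n = 2`: any
homomorphism `wB_2 → GL_2(ℤ[t^{±1}])` with `σ ↦ [[0,t],[1,1-t]]` and
`τ ↦ [[0,1],[1,0]]` is not injective, i.e. has nontrivial kernel. -/
theorem welded_burau_not_injective_n_two
    (f : WB2 →* Matrix.GeneralLinearGroup (Fin 2) (LaurentPolynomial ℤ))
    (hσ : (f WB2.σ : Matrix (Fin 2) (Fin 2) (LaurentPolynomial ℤ)) = !![0, T 1; 1, 1 - T 1])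
    (hτ : (f WB2.τ : Matrix (Fin 2) (Fin 2) (LaurentPolynomial ℤ)) = !![0, 1; 1, 0]) :
    ¬ Function.Injective f := by
  intro hinj
  have hu : (T 1 : LaurentPolynomial ℤ) * T (-1) = 1 := by
    rw [← T_add]; norm_num
  -- the inverse of the image of σ, explicitly
  have hA : ((f WB2.σ : Matrix (Fin 2) (Fin 2) (LaurentPolynomial ℤ)))
      * !![1 - T (-1), 1; T (-1), 0] = 1 := by
    rw [hσ, Matrix.one_fin_two, Matrix.mul_fin_two]
    refine Matrix.ext fun i j => ?_
    fin_cases i <;> fin_cases j <;>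
      simp only [Fin.zero_eta, Fin.mk_one, Matrix.cons_val', Matrix.cons_val_zero,
        Matrix.cons_val_one, Matrix.head_cons, Matrix.empty_val', Matrix.cons_val_fin_one,
        Matrix.head_fin_const, Matrix.of_apply] <;>
      first
        | linear_combination hu
        | linear_combination -hu
        | ring
  have hAinv : (((f WB2.σ)⁻¹ : Matrix.GeneralLinearGroup (Fin 2) (LaurentPolynomial ℤ)) :
      Matrix (Fin 2) (Fin 2) (LaurentPolynomial ℤ)) = !![1 - T (-1), 1; T (-1), 0] := by
    calc (((f WB2.σ)⁻¹ : Matrix.GeneralLinearGroup (Fin 2) (LaurentPolynomial ℤ)) :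
        Matrix (Fin 2) (Fin 2) (LaurentPolynomial ℤ))
        = (((f WB2.σ)⁻¹ : Matrix.GeneralLinearGroup (Fin 2) (LaurentPolynomial ℤ)) :
          Matrix (Fin 2) (Fin 2) (LaurentPolynomial ℤ)) *
          (((f WB2.σ : Matrix (Fin 2) (Fin 2) (LaurentPolynomial ℤ)))
            * !![1 - T (-1), 1; T (-1), 0]) := by rw [hA, mul_one]
      _ = ((((f WB2.σ)⁻¹ : Matrix.GeneralLinearGroup (Fin 2) (LaurentPolynomial ℤ)) :
          Matrix (Fin 2) (Fin 2) (LaurentPolynomial ℤ)) *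
          ((f WB2.σ : Matrix (Fin 2) (Fin 2) (LaurentPolynomial ℤ)))) *
          !![1 - T (-1), 1; T (-1), 0] := by rw [mul_assoc]
      _ = !![1 - T (-1), 1; T (-1), 0] := by
          rw [← Units.val_mul, inv_mul_cancel, Units.val_one, one_mul]
  -- the two words with equal Burau image
  set a : WB2 := WB2.σ * WB2.τ * WB2.σ⁻¹ * WB2.τ with ha
  set b : WB2 := WB2.σ⁻¹ * WB2.τ * WB2.σ * WB2.τ with hb
  have key : f (a * b) = f (b * a) := by
    apply Units.ext
    simp only [ha, hb, map_mul, map_inv, Units.val_mul, hσ, hτ, hAinv, Matrix.mul_fin_two]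
    refine Matrix.ext fun i j => ?_
    fin_cases i <;> fin_cases j <;>
      simp only [Fin.zero_eta, Fin.mk_one, Matrix.cons_val', Matrix.cons_val_zero,
        Matrix.cons_val_one, Matrix.head_cons, Matrix.empty_val', Matrix.cons_val_fin_one,
        Matrix.head_fin_const, Matrix.of_apply] <;>
      first
        | linear_combination (((1 : LaurentPolynomial ℤ) - T 1) * (1 - T (-1))) * hu
        | linear_combination (-(((1 : LaurentPolynomial ℤ) - T 1) * (1 - T (-1)))) * hu
  have hcomm : a * b = b * a := hinj key
  have hperm := congrArg wbPerm hcomm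
  simp only [ha, hb, map_mul, map_inv, wbPerm, WB2.σ, WB2.τ,
    PresentedGroup.toGroup.of, wbPermGen, if_true, if_false] at hperm
  revert hperm
  decide
end
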